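/- A shortcut is never used from its deep umbra: if s ∈ S is a shortcut and p ∈ Û(s), then for every q ∈ C one has d_S(p,q) = d_{S∖{s}}(p,q); that is, no shortest path from p to q uses the shortcut s. -/

import Mathlib

/-!
Arcs and chords are both at least as long as the Euclidean segment between their ends, so by the
triangle inequality in `ℂ` a walk from `p` to an endpoint `a` of a chord `s = ab` costs at least
`|pa|`. If `d(p, b) ≤ |pa| + |s|`, everything up to and including a traversal of `s` from `a` to `b`
can therefore be replaced by the arc from `p` to `b`; repeating this removes every use of `s`.
The deep umbra gives `d(p, v') ≤ |pu'| + |s|` for the endpoint `u'` nearer to `p`; the inequality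
with `u'` and `v'` exchanged follows from `d(p, u') ≤ d(p, v')`, as chord length is monotone in arc
distance.
-/

open Real MeasureTheory

/-- Arc distance between points on the unit circle, given by their polar angles:
the length of the shorter arc between them. -/
noncomputable def arcDist (p q : ℝ) : ℝ := ⨅ n : ℤ, |p - q + 2 * π * n|

/-- Euclidean length of the chord between the circle points with angles `u` and `v`. -/
noncomputable def chordLen (u v : ℝ) : ℝ := 2 * Real.sin (arcDist u v / 2)

/-- A pair of angles is a genuine shortcut (chord) if its endpoints are distinct points. -/
def IsShortcut (s : ℝ × ℝ) : Prop := arcDist s.1 s.2 ≠ 0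

/-- δ(a) = arcsin(a/2) - a/2. -/
noncomputable def sdelta (a : ℝ) : ℝ := Real.arcsin (a / 2) - a / 2

/-- Cost of a path that starts at `p`, fully traverses the listed chords in order
(travelling along the circle in between), and ends at `q`. -/
noncomputable def walkCost (q : ℝ) : ℝ → List (ℝ × ℝ) → ℝ
  | p, [] => arcDist p q
  | p, e :: L => arcDist p e.1 + chordLen e.1 e.2 + walkCost q e.2 L

/-- Shortest-path distance from `p` to `q` using the shortcuts of `S`
(each usable in either orientation, and always traversed completely). -/
noncomputable def dS (S : Finset (ℝ × ℝ)) (p q : ℝ) : ℝ :=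
  sInf {c | ∃ L : List (ℝ × ℝ), (∀ e ∈ L, e ∈ S ∨ (e.2, e.1) ∈ S) ∧ c = walkCost q p L}

/-- Diameter of the circle augmented with the shortcuts of `S`. -/
noncomputable def diamS (S : Finset (ℝ × ℝ)) : ℝ :=
  sSup {d | ∃ p q : ℝ, d = dS S p q}

/-- diam(k): the optimal diameter achievable with `k` shortcuts. -/
noncomputable def diamK (k : ℕ) : ℝ :=
  sInf {d | ∃ S : Finset (ℝ × ℝ), S.card = k ∧ (∀ s ∈ S, IsShortcut s) ∧ d = diamS S}

/-- Distance from `p` to `q` when a single shortcut with endpoints `u`, `v` is available. -/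
noncomputable def dOne (u v p q : ℝ) : ℝ :=
  min (arcDist p q)
    (min (arcDist p u + chordLen u v + arcDist v q)
      (arcDist p v + chordLen u v + arcDist u q))

/-- Two angles represent the same point of the circle. -/
def SamePoint (p q : ℝ) : Prop := arcDist p q = 0

/-- Two pairs of angles represent the same chord of the circle. -/
def SameChord (s t : ℝ × ℝ) : Prop :=
  (SamePoint s.1 t.1 ∧ SamePoint s.2 t.2) ∨ (SamePoint s.1 t.2 ∧ SamePoint s.2 t.1)

/-- `p` lies in the deep umbra of the shortcut from `u` to `u + β`
(where `0 < β ≤ π` is the counterclockwise arc spanned by the shortcut):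
`p` lies in the inner umbra, and `|p u'| + |s| ≥ d(p, v')` where `u'` is the
endpoint closer to `p` and `v'` the other one. -/
def InDeepUmbra (u β p : ℝ) : Prop :=
  (∃ t : ℝ, sdelta (chordLen u (u + β)) ≤ t ∧ t ≤ β - sdelta (chordLen u (u + β)) ∧
    arcDist p (u + t) = 0) ∧
  (arcDist p u ≤ arcDist p (u + β) →
    arcDist p (u + β) ≤ chordLen p u + chordLen u (u + β)) ∧
  (arcDist p (u + β) ≤ arcDist p u →
    arcDist p u ≤ chordLen p (u + β) + chordLen u (u + β))

/-- `d` equals δ*_k : for `k ∈ {3,4,5}` this is `δ(a*_k)` where `a*_k + δ(a*_k) = (k-1)π/k`,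
and for `k = 6` it is `δ(2) = π/2 - 1`. -/
def dstarSpec (k : ℕ) (d : ℝ) : Prop :=
  (k = 6 ∧ d = sdelta 2) ∨
    (∃ a, a ∈ Set.Icc (0 : ℝ) 2 ∧ a + sdelta a = ((k : ℝ) - 1) * π / k ∧ d = sdelta a)

lemma arcDist_eq_norm (p q : ℝ) : arcDist p q = ‖((p - q : ℝ) : AddCircle (2 * π))‖ := by
  refine le_antisymm ?_ (le_ciInf fun n => ?_)
  · rw [AddCircle.norm_eq]
    refine (ciInf_le ⟨0, ?_⟩ (-round ((2 * π)⁻¹ * (p - q)))).trans_eq ?_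
    · rintro _ ⟨n, rfl⟩; positivity
    · push_cast; ring_nf
  · have hperiod :
        ((p - q + 2 * π * n : ℝ) : AddCircle (2 * π)) = ((p - q : ℝ) : AddCircle (2 * π)) := by
      rw [AddCircle.coe_add, show 2 * π * (n : ℝ) = n • (2 * π) by rw [zsmul_eq_mul, mul_comm],
        AddCircle.coe_zsmul, AddCircle.coe_period, smul_zero, add_zero]
    rw [← hperiod]
    exact QuotientAddGroup.norm_mk_le_norm

lemma arcDist_nonneg (p q : ℝ) : 0 ≤ arcDist p q := by
  rw [arcDist_eq_norm]; exact norm_nonneg _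

lemma arcDist_comm (p q : ℝ) : arcDist p q = arcDist q p := by
  rw [arcDist_eq_norm, arcDist_eq_norm, ← norm_neg, ← AddCircle.coe_neg, neg_sub]

lemma arcDist_triangle (p q r : ℝ) : arcDist p r ≤ arcDist p q + arcDist q r := by
  simp only [arcDist_eq_norm]
  rw [← sub_add_sub_cancel p q r, AddCircle.coe_add]
  exact norm_add_le _ _

lemma arcDist_le_pi (p q : ℝ) : arcDist p q ≤ π := by
  rw [arcDist_eq_norm]
  refine (AddCircle.norm_le_half_period _ two_pi_pos.ne').trans_eq ?_
  rw [abs_of_pos two_pi_pos]; ring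

lemma chordLen_eq_dist (p q : ℝ) :
    chordLen p q = dist (Complex.exp (p * Complex.I)) (Complex.exp (q * Complex.I)) := by
  set y := p - q - round ((2 * π)⁻¹ * (p - q)) * (2 * π)
  have harc : arcDist p q = |y| := by rw [arcDist_eq_norm, AddCircle.norm_eq]
  have hy : |y / 2| ≤ π := by
    rw [abs_div, abs_two]; linarith [harc ▸ arcDist_le_pi p q, abs_nonneg y]
  have hexp :
      Complex.exp (p * Complex.I) = Complex.exp (q * Complex.I) * Complex.exp (Complex.I * y) := by
    calc Complex.exp (p * Complex.I)
        = Complex.exp (q * Complex.I + Complex.I * y +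
            round ((2 * π)⁻¹ * (p - q)) * (2 * π * Complex.I)) := by
          congr 1; simp only [y]; push_cast; ring
      _ = Complex.exp (q * Complex.I) * Complex.exp (Complex.I * y) := by
          rw [Complex.exp_add, Complex.exp_int_mul_two_pi_mul_I, mul_one, Complex.exp_add]
  rw [dist_eq_norm, hexp, ← mul_sub_one, norm_mul, Complex.norm_exp_ofReal_mul_I, one_mul,
    Complex.norm_exp_I_mul_ofReal_sub_one, norm_mul, Real.norm_two, Real.norm_eq_abs,
    Real.abs_sin_eq_sin_abs_of_abs_le_pi hy, abs_div, abs_two, chordLen, harc]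

lemma chordLen_nonneg (p q : ℝ) : 0 ≤ chordLen p q := by
  rw [chordLen_eq_dist]; exact dist_nonneg

lemma chordLen_comm (p q : ℝ) : chordLen p q = chordLen q p := by
  rw [chordLen, chordLen, arcDist_comm]

lemma chordLen_triangle (p q r : ℝ) : chordLen p r ≤ chordLen p q + chordLen q r := by
  simp only [chordLen_eq_dist]; exact dist_triangle _ _ _

lemma chordLen_le_arcDist (p q : ℝ) : chordLen p q ≤ arcDist p q := by
  have := Real.sin_le (div_nonneg (arcDist_nonneg p q) zero_le_two)
  rw [chordLen]; linarith

lemma chordLen_le_chordLen {p a b : ℝ} (h : arcDist p a ≤ arcDist p b) :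
    chordLen p a ≤ chordLen p b := by
  have ha := arcDist_nonneg p a
  have hb := arcDist_le_pi p b
  rw [chordLen, chordLen]
  gcongr
  exact Real.sin_le_sin_of_le_of_le_pi_div_two (by linarith [pi_pos]) (by linarith) (by linarith)

lemma walkCost_nonneg (q : ℝ) : ∀ (p : ℝ) (L : List (ℝ × ℝ)), 0 ≤ walkCost q p L
  | p, [] => arcDist_nonneg p q
  | p, e :: L => by
    have := walkCost_nonneg q e.2 L
    have := arcDist_nonneg p e.1
    have := chordLen_nonneg e.1 e.2
    rw [walkCost]; linarith

lemma walkCost_append_cons (q : ℝ) (e : ℝ × ℝ) (L₂ : List (ℝ × ℝ)) :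
    ∀ (p : ℝ) (L₁ : List (ℝ × ℝ)),
      walkCost q p (L₁ ++ e :: L₂) = walkCost e.1 p L₁ + chordLen e.1 e.2 + walkCost q e.2 L₂
  | p, [] => by simp only [List.nil_append, walkCost]
  | p, f :: L₁ => by
    rw [List.cons_append, walkCost, walkCost, walkCost_append_cons q e L₂ f.2 L₁]; ring

lemma chordLen_le_walkCost (q : ℝ) : ∀ (p : ℝ) (L : List (ℝ × ℝ)), chordLen p q ≤ walkCost q p L
  | p, [] => chordLen_le_arcDist p q
  | p, e :: L => by
    have := chordLen_le_walkCost q e.2 L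
    have := chordLen_triangle p e.1 q
    have := chordLen_triangle e.1 e.2 q
    have := chordLen_le_arcDist p e.1
    rw [walkCost]; linarith

lemma walkCost_le_arcDist_add (p r q : ℝ) (L : List (ℝ × ℝ)) :
    walkCost q p L ≤ arcDist p r + walkCost q r L := by
  cases L with
  | nil => exact arcDist_triangle p r q
  | cons e L =>
    have := arcDist_triangle p r e.1
    simp only [walkCost]; linarith

lemma walkCost_le_walkCost_append_cons {p q : ℝ} {e : ℝ × ℝ}
    (he : arcDist p e.2 ≤ chordLen p e.1 + chordLen e.1 e.2) (L₁ L₂ : List (ℝ × ℝ)) :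
    walkCost q p L₂ ≤ walkCost q p (L₁ ++ e :: L₂) := by
  have := walkCost_le_arcDist_add p e.2 q L₂
  have := chordLen_le_walkCost e.1 p L₁
  rw [walkCost_append_cons]; linarith

lemma exists_suffix_avoiding_chord {p q u v : ℝ}
    (huv : arcDist p v ≤ chordLen p u + chordLen u v)
    (hvu : arcDist p u ≤ chordLen p v + chordLen v u) (L : List (ℝ × ℝ)) :
    ∃ L', L' <:+ L ∧ (∀ e ∈ L', e ≠ (u, v) ∧ e ≠ (v, u)) ∧ walkCost q p L' ≤ walkCost q p L := by
  by_cases h : ∃ e ∈ L, e = (u, v) ∨ e = (v, u)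
  · obtain ⟨e, he, huse⟩ := h
    obtain ⟨L₁, L₂, rfl⟩ := List.append_of_mem he
    have hskip : walkCost q p L₂ ≤ walkCost q p (L₁ ++ e :: L₂) := by
      apply walkCost_le_walkCost_append_cons
      rcases huse with rfl | rfl <;> assumption
    obtain ⟨L', hsuf, havoid, hcost⟩ := exists_suffix_avoiding_chord (q := q) huv hvu L₂
    exact ⟨L', hsuf.trans ((List.suffix_cons e L₂).trans (List.suffix_append L₁ _)), havoid,
      hcost.trans hskip⟩
  · push Not at h
    exact ⟨L, List.suffix_refl L, h, le_rfl⟩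
termination_by L.length
decreasing_by grind

def UsesOnly (S : Finset (ℝ × ℝ)) (L : List (ℝ × ℝ)) : Prop :=
  ∀ e ∈ L, e ∈ S ∨ (e.2, e.1) ∈ S

lemma UsesOnly.of_suffix {S : Finset (ℝ × ℝ)} {L L' : List (ℝ × ℝ)} (hL : UsesOnly S L)
    (h : L' <:+ L) : UsesOnly S L' :=
  fun e he => hL e (h.subset he)

lemma UsesOnly.mono {S T : Finset (ℝ × ℝ)} {L : List (ℝ × ℝ)} (hL : UsesOnly T L) (h : T ⊆ S) :
    UsesOnly S L :=
  fun e he => (hL e he).imp (@h _) (@h _)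

lemma UsesOnly.sdiff_pair {S : Finset (ℝ × ℝ)} {L : List (ℝ × ℝ)} {u v : ℝ} (hL : UsesOnly S L)
    (havoid : ∀ e ∈ L, e ≠ (u, v) ∧ e ≠ (v, u)) : UsesOnly (S \ {(u, v), (v, u)}) L := by
  intro e he
  obtain ⟨a, b⟩ := e
  have hS := hL _ he
  have hne := havoid _ he
  simp only [Finset.mem_sdiff, Finset.mem_insert, Finset.mem_singleton, Prod.mk.injEq,
    ne_eq] at hS hne ⊢
  tauto

lemma dS_le_walkCost {S : Finset (ℝ × ℝ)} {p q : ℝ} {L : List (ℝ × ℝ)} (hL : UsesOnly S L) :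
    dS S p q ≤ walkCost q p L :=
  csInf_le ⟨0, by rintro _ ⟨L, -, rfl⟩; exact walkCost_nonneg q p L⟩ ⟨L, hL, rfl⟩

lemma le_dS {S : Finset (ℝ × ℝ)} {p q c : ℝ} (h : ∀ L, UsesOnly S L → c ≤ walkCost q p L) :
    c ≤ dS S p q :=
  le_csInf ⟨_, [], nofun, rfl⟩ (by rintro _ ⟨L, hL, rfl⟩; exact h L hL)

lemma dS_anti {S T : Finset (ℝ × ℝ)} (h : T ⊆ S) (p q : ℝ) : dS S p q ≤ dS T p q :=
  le_dS fun _ hL => dS_le_walkCost (hL.mono h)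

lemma arcDist_le_chordLen_add_of_imp {p a b c : ℝ}
    (hab : arcDist p a ≤ arcDist p b → arcDist p b ≤ chordLen p a + c)
    (hba : arcDist p b ≤ arcDist p a → arcDist p a ≤ chordLen p b + c) :
    arcDist p b ≤ chordLen p a + c := by
  rcases le_total (arcDist p a) (arcDist p b) with h | h
  · exact hab h
  · linarith [hba h, chordLen_le_chordLen h]

lemma InDeepUmbra.arcDist_le {u β p : ℝ} (hp : InDeepUmbra u β p) :
    arcDist p (u + β) ≤ chordLen p u + chordLen u (u + β) ∧
      arcDist p u ≤ chordLen p (u + β) + chordLen (u + β) u := by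
  obtain ⟨-, hnear, hfar⟩ := hp
  rw [chordLen_comm (u + β)]
  exact ⟨arcDist_le_chordLen_add_of_imp hnear hfar, arcDist_le_chordLen_add_of_imp hfar hnear⟩

theorem stmt11_general (u β : ℝ) (p : ℝ)
    (hp : InDeepUmbra u β p) (S : Finset (ℝ × ℝ)) :
    ∀ q : ℝ, dS S p q = dS (S \ {(u, u + β), (u + β, u)}) p q := by
  intro q
  obtain ⟨huv, hvu⟩ := hp.arcDist_le
  refine le_antisymm (dS_anti Finset.sdiff_subset p q) (le_dS fun L hL => ?_)
  obtain ⟨L', hsuf, havoid, hcost⟩ := exists_suffix_avoiding_chord (q := q) huv hvu L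
  exact (dS_le_walkCost ((hL.of_suffix hsuf).sdiff_pair havoid)).trans hcost

/-- a shortcut is never used from its deep umbra. Let the shortcut `s`
span the counterclockwise arc from `u` to `v = u + β` with `0 < β ≤ π`. If `s ∈ S`
(possibly in reversed orientation) and `p` lies in the deep umbra of `s`, then for
every `q` we have `d_S(p,q) = d_{S∖{s}}(p,q)`. -/
theorem stmt11 (u β : ℝ) (hβ : 0 < β) (hβπ : β ≤ π) (p : ℝ)
    (hp : InDeepUmbra u β p) (S : Finset (ℝ × ℝ)) (hS : (u, u + β) ∈ S) :
    ∀ q : ℝ, dS S p q = dS (S \ {(u, u + β), (u + β, u)}) p q :=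
  stmt11_general u β p hp S
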